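/- Let n ≥ 3, f : ℝⁿ → ℝ nonvanishing smooth, and φ a smooth positive solution of φ_{,xᵢxᵢ}/φ − |∇φ|²/(2φ²) = φ² f for every i and φ_{,xᵢxⱼ} = 0 for i ≠ j. Then there exist constants a, b₁,...,bₙ, c ∈ ℝ such that φ(x) = Σᵢ (a xᵢ² + bᵢ xᵢ) + c, and f(x) = −λ / (2 φ(x)⁴) where λ = Σᵢ bᵢ² − 4ac. -/

import Mathlib

noncomputable def pd {n : ℕ} (φ : (Fin n → ℝ) → ℝ) (i : Fin n) (x : Fin n → ℝ) : ℝ :=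
  fderiv ℝ φ x (Pi.single i 1)

lemma clm_ext_zero {n : ℕ} (L : (Fin n → ℝ) →L[ℝ] ℝ)
    (h : ∀ i, L (Pi.single i 1) = 0) : L = 0 := by
  ext v
  have hv : v = ∑ i, v i • (Pi.single i 1 : Fin n → ℝ) := by
    funext j
    simp [Finset.sum_apply, Pi.single_apply]
  rw [hv]
  simp [map_sum, map_smul, h]

lemma pd_smooth {n : ℕ} {g : (Fin n → ℝ) → ℝ} (hg : ContDiff ℝ (⊤ : ℕ∞) g) (i : Fin n) :
    ContDiff ℝ (⊤ : ℕ∞) (pd g i) :=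
  (hg.fderiv_right (by simp)).clm_apply contDiff_const

lemma pd_pd_eq {n : ℕ} {g : (Fin n → ℝ) → ℝ} (hg : ContDiff ℝ (⊤ : ℕ∞) g) (i j : Fin n)
    (x : Fin n → ℝ) :
    pd (pd g j) i x = fderiv ℝ (fderiv ℝ g) x (Pi.single i 1) (Pi.single j 1) := by
  have hd : DifferentiableAt ℝ (fderiv ℝ g) x :=
    ((hg.fderiv_right (m := (⊤ : ℕ∞)) (by simp)).differentiable (by simp)).differentiableAt
  show fderiv ℝ (fun y => (fderiv ℝ g y) (Pi.single j 1)) x (Pi.single i 1) = _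
  rw [fderiv_clm_apply hd (differentiableAt_const _)]
  simp

lemma pd_comm {n : ℕ} {g : (Fin n → ℝ) → ℝ} (hg : ContDiff ℝ (⊤ : ℕ∞) g) (i j : Fin n)
    (x : Fin n → ℝ) : pd (pd g j) i x = pd (pd g i) j x := by
  rw [pd_pd_eq hg, pd_pd_eq hg]
  exact (hg.contDiffAt.isSymmSndFDerivAt (by simp [minSmoothness_of_isRCLikeNormedField]; exact WithTop.coe_le_coe.mpr (le_top : (2 : ℕ∞) ≤ ⊤))) _ _

lemma const_of_pd_zero {n : ℕ} {g : (Fin n → ℝ) → ℝ} (hg : Differentiable ℝ g)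
    (h : ∀ i x, pd g i x = 0) (x y : Fin n → ℝ) : g x = g y := by
  apply is_const_of_fderiv_eq_zero hg
  intro z
  exact clm_ext_zero _ (fun i => h i z)

lemma q_hasFDeriv {n : ℕ} (a c : ℝ) (b : Fin n → ℝ) (x : Fin n → ℝ) :
    HasFDerivAt (fun y : Fin n → ℝ => (∑ i, (a * y i ^ 2 + b i * y i)) + c)
      (∑ i, (2 * a * x i + b i) • (ContinuousLinearMap.proj i : (Fin n → ℝ) →L[ℝ] ℝ)) x := by
  have h : ∀ i : Fin n, HasFDerivAt (fun y : Fin n → ℝ => a * y i ^ 2 + b i * y i)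
      ((2 * a * x i + b i) • (ContinuousLinearMap.proj i : (Fin n → ℝ) →L[ℝ] ℝ)) x := by
    intro i
    have h1 : HasFDerivAt (fun y : Fin n → ℝ => y i)
        (ContinuousLinearMap.proj i : (Fin n → ℝ) →L[ℝ] ℝ) x :=
      by exact (ContinuousLinearMap.proj (R := ℝ) (φ := fun _ : Fin n => ℝ) i).hasFDerivAt
    have h2 : HasFDerivAt (fun y : Fin n → ℝ => a * (y i * y i) + b i * y i)
        (a • (x i • (ContinuousLinearMap.proj i : (Fin n → ℝ) →L[ℝ] ℝ)
          + x i • (ContinuousLinearMap.proj i : (Fin n → ℝ) →L[ℝ] ℝ))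
          + b i • (ContinuousLinearMap.proj i : (Fin n → ℝ) →L[ℝ] ℝ)) x :=
      ((h1.mul h1).const_mul a).add (h1.const_mul (b i))
    have hfun : (fun y : Fin n → ℝ => a * y i ^ 2 + b i * y i)
        = fun y : Fin n → ℝ => a * (y i * y i) + b i * y i := by
      funext y; ring
    rw [hfun]
    convert h2 using 1
    ext v
    simp
    ring
  have hs := HasFDerivAt.fun_sum (fun i (_ : i ∈ Finset.univ) => h i)
  exact hs.add_const c

lemma pd_q {n : ℕ} (a c : ℝ) (b : Fin n → ℝ) (k : Fin n) (x : Fin n → ℝ) :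
    pd (fun y : Fin n → ℝ => (∑ i, (a * y i ^ 2 + b i * y i)) + c) k x
      = 2 * a * x k + b k := by
  show fderiv ℝ _ x (Pi.single k 1) = _
  rw [(q_hasFDeriv a c b x).fderiv]
  simp [Pi.single_apply]

theorem stmt8 (n : ℕ) (hn : 3 ≤ n)
    (f : (Fin n → ℝ) → ℝ) (hf : ContDiff ℝ (⊤ : ℕ∞) f) (hfne : ∀ x, f x ≠ 0)
    (φ : (Fin n → ℝ) → ℝ) (hφs : ContDiff ℝ (⊤ : ℕ∞) φ) (hφpos : ∀ x, 0 < φ x)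
    (heq : ∀ i : Fin n, ∀ x, pd (pd φ i) i x / φ x
      - (∑ k, (pd φ k x) ^ 2) / (2 * φ x ^ 2) = φ x ^ 2 * f x)
    (hmix : ∀ i j : Fin n, i ≠ j → ∀ x, pd (pd φ j) i x = 0) :
    ∃ a c : ℝ, ∃ b : Fin n → ℝ,
      (∀ x, φ x = (∑ i, (a * x i ^ 2 + b i * x i)) + c) ∧
      (∀ x, f x = -((∑ i, b i ^ 2) - 4 * a * c) / (2 * φ x ^ 4)) := by
  have hφd : Differentiable ℝ φ := hφs.differentiable (by simp)
  let i0 : Fin n := ⟨0, by omega⟩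
  -- diagonal second derivatives agree
  have hdiag : ∀ i j x, pd (pd φ i) i x = pd (pd φ j) j x := by
    intro i j x
    have h1 := heq i x
    have h2 := heq j x
    have hne : φ x ≠ 0 := (hφpos x).ne'
    have h3 : pd (pd φ i) i x / φ x = pd (pd φ j) j x / φ x := by linarith
    field_simp at h3
    exact h3
  -- third derivatives vanish
  have h3rd : ∀ j k x, pd (pd (pd φ j) j) k x = 0 := by
    have aux : ∀ j k : Fin n, k ≠ j → ∀ x, pd (pd (pd φ j) j) k x = 0 := by
      intro j k hkj x
      rw [pd_comm (pd_smooth hφs j) k j x]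
      have hz : pd (pd φ j) k = fun _ => (0 : ℝ) := funext (fun y => hmix k j hkj y)
      rw [hz]
      simp [pd]
    intro j k x
    by_cases hkj : k = j
    · subst hkj
      obtain ⟨l, hl⟩ := Fintype.exists_ne_of_one_lt_card (by simp; omega) k
      have hfun : pd (pd φ k) k = pd (pd φ l) l := funext (fun y => hdiag k l y)
      rw [hfun]
      exact aux l k hl.symm x
    · exact aux j k hkj x
  -- the common diagonal second derivative is a constant A
  set A := pd (pd φ i0) i0 0 with hAdef
  have hconst : ∀ j x, pd (pd φ j) j x = A := by
    intro j x
    rw [hdiag j i0 x]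
    exact const_of_pd_zero ((pd_smooth (pd_smooth hφs i0) i0).differentiable (by simp))
      (fun k y => h3rd i0 k y) x 0
  set a : ℝ := A / 2 with hadef
  set b : (Fin n) → ℝ := fun i => pd φ i 0 with hbdef
  -- gradient is affine
  have hgrad : ∀ k x, pd φ k x = 2 * a * x k + b k := by
    intro k x
    have hproj : ∀ (y : Fin n → ℝ), HasFDerivAt (fun y : Fin n → ℝ => A * y k)
        (A • (ContinuousLinearMap.proj k : (Fin n → ℝ) →L[ℝ] ℝ)) y := by
      intro y
      have h1 : HasFDerivAt (fun y : Fin n → ℝ => y k)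
          (ContinuousLinearMap.proj k : (Fin n → ℝ) →L[ℝ] ℝ) y := by
        exact (ContinuousLinearMap.proj (R := ℝ) (φ := fun _ : Fin n => ℝ) k).hasFDerivAt
      simpa using h1.const_mul A
    have hψpd : ∀ i y, pd (fun y => pd φ k y - A * y k) i y = 0 := by
      intro i y
      show fderiv ℝ _ y (Pi.single i 1) = 0
      rw [fderiv_fun_sub (((pd_smooth hφs k).differentiable (by simp)) y) (hproj y).differentiableAt]
      rw [(hproj y).fderiv]
      simp only [ContinuousLinearMap.sub_apply, ContinuousLinearMap.smul_apply]
      by_cases hik : i = k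
      · subst hik
        have := hconst i y
        simp only [pd] at this ⊢
        rw [this]
        simp
      · have := hmix i k hik y
        simp only [pd] at this ⊢
        rw [this]
        simp [Pi.single_apply, hik]
    have hψd : Differentiable ℝ (fun y => pd φ k y - A * y k) :=
      ((pd_smooth hφs k).differentiable (by simp)).sub (fun y => (hproj y).differentiableAt)
    have hcc := const_of_pd_zero hψd hψpd x 0
    simp only [Pi.zero_apply, mul_zero, sub_zero] at hcc
    rw [hadef]
    have hbk : b k = pd φ k 0 := rfl
    rw [hbk]
    linarith
  -- φ is the quadratic
  have hφq : ∀ x, φ x = (∑ i, (a * x i ^ 2 + b i * x i)) + φ 0 := by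
    have hqd : Differentiable ℝ (fun y : Fin n → ℝ => (∑ i, (a * y i ^ 2 + b i * y i)) + φ 0) :=
      fun y => (q_hasFDeriv a (φ 0) b y).differentiableAt
    have hr : ∀ i y, pd (fun y => φ y - ((∑ i, (a * y i ^ 2 + b i * y i)) + φ 0)) i y = 0 := by
      intro i y
      show fderiv ℝ _ y (Pi.single i 1) = 0
      rw [fderiv_fun_sub (hφd y) (hqd y)]
      simp only [ContinuousLinearMap.sub_apply]
      have h1 := hgrad i y
      have h2 := pd_q a (φ 0) b i y
      simp only [pd] at h1 h2
      rw [h1, h2]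
      ring
    intro x
    have hc := const_of_pd_zero (hφd.sub hqd) hr x 0
    simp only [Pi.sub_apply, Pi.zero_apply] at hc
    have h0 : (∑ i : Fin n, (a * (0:ℝ) ^ 2 + b i * (0:ℝ))) = 0 := by simp
    rw [h0] at hc
    linarith
  refine ⟨a, φ 0, b, hφq, ?_⟩
  intro x
  have hPne : φ x ≠ 0 := (hφpos x).ne'
  have h2 := heq i0 x
  rw [hconst i0 x] at h2
  have hS : ∑ k, (pd φ k x) ^ 2 = 4 * a * (φ x - φ 0) + ∑ k, b k ^ 2 := by
    have h1 : ∀ k ∈ Finset.univ, (pd φ k x) ^ 2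
        = 4 * a * (a * x k ^ 2 + b k * x k) + b k ^ 2 := by
      intro k _
      rw [hgrad k x]
      ring
    rw [Finset.sum_congr rfl h1, Finset.sum_add_distrib, ← Finset.mul_sum]
    have hq : ∑ i, (a * x i ^ 2 + b i * x i) = φ x - φ 0 := by rw [hφq x]; ring
    rw [hq]
  rw [hS] at h2
  have hA2 : A = 2 * a := by rw [hadef]; ring
  rw [hA2] at h2
  field_simp at h2 ⊢
  nlinarith [h2, sq_nonneg (φ x), hφpos x]
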